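/- arXiv:1809.09716 — 2 statements merged into one kernel-verified Lean document; each statement's English description precedes it below -/
import Mathlib

section
/- Let $\mathbb{A} = \{x \in \mathbb{R}^{n_A} \mid H_A x \le h_A\}$ and $\mathbb{B} = \{x \in \mathbb{R}^{n_B} \mid H_B x \le h_B\}$ be polytopes with $\mathbb{B}$ nonempty, let $T \in \mathbb{R}^{n_A \times n_B}$ and $d \in \mathbb{R}^{n_A}$. Then $T\mathbb{B} + \{d\} \subseteq \mathbb{A}$ if and only if there exists a matrix $\Lambda \ge 0$ (entrywise) such that $\Lambda H_B = H_A T$ and $\Lambda h_B \le h_A - H_A d$. -/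
/-!
The direction `⇐` is monotonicity of multiplication by `Λ ≥ 0`. For `⇒`, row `i` of the
containment says that the functional `(H_A T)_i` is bounded above by `h_{A,i} - (H_A d)_i` on the
nonempty polyhedron `𝔹`. The affine Farkas lemma turns this bound into a nonnegative `y` with
`y H_B = (H_A T)_i` and `y ⬝ h_B ≤ h_{A,i} - (H_A d)_i`; these `y` are the rows of `Λ`.
Farkas' lemma itself comes from separating a point from the cone spanned by finitely many vectors,
which is closed because, by Carathéodory's theorem for cones, it is a finite union of images of
orthants under injective linear maps. The affine version follows by homogenizing the system.
-/

open Matrix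

section ConicHull

variable {ι E : Type*} [AddCommGroup E] [Module ℝ E]

def conicHull (v : ι → E) (s : Finset ι) : PointedCone ℝ E where
  carrier := {x | ∃ m : ι → ℝ, (∀ i ∈ s, 0 ≤ m i) ∧ ∑ i ∈ s, m i • v i = x}
  zero_mem' := ⟨0, fun _ _ => le_rfl, by simp⟩
  add_mem' := by
    rintro _ _ ⟨m, hm, rfl⟩ ⟨m', hm', rfl⟩
    exact ⟨m + m', fun i hi => add_nonneg (hm i hi) (hm' i hi), by
      simp only [Pi.add_apply, add_smul, Finset.sum_add_distrib]⟩
  smul_mem' := by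
    rintro ⟨c, hc⟩ _ ⟨m, hm, rfl⟩
    exact ⟨c • m, fun i hi => mul_nonneg hc (hm i hi), by
      simp [Finset.smul_sum, smul_smul]⟩

variable {v : ι → E} {s t : Finset ι} {x : E}

theorem mem_conicHull :
    x ∈ conicHull v s ↔ ∃ m : ι → ℝ, (∀ i ∈ s, 0 ≤ m i) ∧ ∑ i ∈ s, m i • v i = x :=
  Iff.rfl

theorem conicHull_mono (hts : t ⊆ s) : conicHull v t ≤ conicHull v s := by
  classical
  rintro _ ⟨m, hm, rfl⟩
  refine ⟨fun i => if i ∈ t then m i else 0, fun i _ => ?_, ?_⟩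
  · dsimp only
    split_ifs with hi
    exacts [hm i hi, le_rfl]
  · simp [ite_smul, Finset.sum_ite_mem, Finset.inter_eq_right.mpr hts]

theorem apply_mem_conicHull {i : ι} (hi : i ∈ s) : v i ∈ conicHull v s := by
  classical
  exact ⟨Pi.single i 1, fun j _ => by rw [Pi.single_apply]; split_ifs <;> norm_num, by
    simp [Pi.single_apply, ite_smul, Finset.sum_ite_eq', hi]⟩

/-- Shifting the coefficients along a positive linear relation until the first one vanishes. -/
theorem exists_mem_conicHull_erase [DecidableEq ι] {g : ι → ℝ} (hg : ∑ i ∈ s, g i • v i = 0)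
    (hpos : ∃ i ∈ s, g i ≠ 0) (hx : x ∈ conicHull v s) :
    ∃ i ∈ s, x ∈ conicHull v (s.erase i) := by
  wlog hpos' : ∃ i ∈ s, 0 < g i generalizing g
  · push Not at hpos'
    obtain ⟨i, hi, hgi⟩ := hpos
    exact this (g := -g) (by simp [neg_smul, hg]) ⟨i, hi, by simpa using hgi⟩
      ⟨i, hi, by simpa using lt_of_le_of_ne (hpos' i hi) hgi⟩
  obtain ⟨m, hm, rfl⟩ := hx
  obtain ⟨i, hi, hgi⟩ := hpos'
  obtain ⟨i₀, hi₀, hmin⟩ := (s.filter (0 < g ·)).exists_min_image (fun i => m i / g i)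
    ⟨i, Finset.mem_filter.mpr ⟨hi, hgi⟩⟩
  obtain ⟨hi₀s, hgi₀⟩ := Finset.mem_filter.mp hi₀
  set r := m i₀ / g i₀
  have hr : 0 ≤ r := div_nonneg (hm i₀ hi₀s) hgi₀.le
  have hm' : ∀ i ∈ s, 0 ≤ m i - r * g i := by
    intro i hi
    rcases lt_or_ge 0 (g i) with hgi | hgi
    · have := (le_div_iff₀ hgi).mp (hmin i (Finset.mem_filter.mpr ⟨hi, hgi⟩))
      linarith
    · nlinarith [hm i hi]
  have hsum : ∑ i ∈ s, (m i - r * g i) • v i = ∑ i ∈ s, m i • v i := by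
    simp [sub_smul, Finset.sum_sub_distrib, mul_smul, ← Finset.smul_sum, hg]
  have hzero : m i₀ - r * g i₀ = 0 := by
    simp only [r, div_mul_cancel₀ _ hgi₀.ne', sub_self]
  refine ⟨i₀, hi₀s, fun i => m i - r * g i,
    fun i hi => hm' i (Finset.mem_of_mem_erase hi), ?_⟩
  rw [Finset.sum_erase s (by simp only [hzero, zero_smul]), hsum]

theorem exists_linearIndepOn_mem_conicHull (hx : x ∈ conicHull v s) :
    ∃ t ⊆ s, LinearIndepOn ℝ v (t : Set ι) ∧ x ∈ conicHull v t := by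
  classical
  induction s using Finset.strongInduction with
  | H s ih =>
    by_cases hind : LinearIndepOn ℝ v (s : Set ι)
    · exact ⟨s, subset_rfl, hind, hx⟩
    obtain ⟨g, hg, hpos⟩ := not_linearIndepOn_finset_iff.mp hind
    obtain ⟨i, hi, hxi⟩ := exists_mem_conicHull_erase hg hpos hx
    obtain ⟨t, hts, ht, hxt⟩ := ih _ (Finset.erase_ssubset hi) hxi
    exact ⟨t, hts.trans (Finset.erase_subset _ _), ht, hxt⟩

theorem coe_conicHull_eq_image :
    (conicHull v s : Set E) =
      Fintype.linearCombination ℝ (fun i : s => v i) '' {c | 0 ≤ c} := by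
  classical
  ext x
  simp only [SetLike.mem_coe, mem_conicHull, Set.mem_image, Set.mem_ofPred_eq,
    Fintype.linearCombination_apply]
  constructor
  · rintro ⟨m, hm, rfl⟩
    exact ⟨fun i => m i, fun i => hm i i.2, Finset.sum_coe_sort s (fun i => m i • v i)⟩
  · rintro ⟨c, hc, rfl⟩
    refine ⟨fun i => if h : i ∈ s then c ⟨i, h⟩ else 0, fun i hi => by simpa [hi] using hc _, ?_⟩
    rw [← Finset.sum_coe_sort s]
    simp

variable [TopologicalSpace E] [IsTopologicalAddGroup E] [ContinuousSMul ℝ E] [T2Space E]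

theorem isClosed_conicHull_of_linearIndepOn (hv : LinearIndepOn ℝ v (s : Set ι)) :
    IsClosed (conicHull v s : Set E) := by
  rw [coe_conicHull_eq_image]
  have hinj := LinearIndependent.fintypeLinearCombination_injective hv
  exact (LinearMap.isClosedEmbedding_of_injective (LinearMap.ker_eq_bot.mpr hinj)).isClosedMap _
    (isClosed_le continuous_const continuous_id)

theorem isClosed_conicHull : IsClosed (conicHull v s : Set E) := by
  have : (conicHull v s : Set E) =
      ⋃ t ∈ {t : Finset ι | t ⊆ s ∧ LinearIndepOn ℝ v (t : Set ι)}, conicHull v t := by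
    ext x
    simp only [Set.mem_iUnion, Set.mem_ofPred_eq, SetLike.mem_coe, exists_prop]
    constructor
    · intro hx
      obtain ⟨t, hts, ht, hxt⟩ := exists_linearIndepOn_mem_conicHull hx
      exact ⟨t, ⟨hts, ht⟩, hxt⟩
    · rintro ⟨t, ⟨hts, -⟩, hxt⟩
      exact conicHull_mono hts hxt
  rw [this]
  refine Set.Finite.isClosed_biUnion ?_ fun t ht => isClosed_conicHull_of_linearIndepOn ht.2
  exact s.powerset.finite_toSet.subset fun t ht => Finset.mem_powerset.mpr ht.1

end ConicHull

namespace Matrix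

variable {m n : Type*} [Fintype n]

theorem exists_dotProduct_eq_of_strongDual (f : StrongDual ℝ (n → ℝ)) :
    ∃ z : n → ℝ, ∀ u, f u = u ⬝ᵥ z := by
  classical
  exact ⟨fun i => f fun j => if i = j then 1 else 0, LinearMap.pi_apply_eq_sum_univ f.toLinearMap⟩

/-- **Farkas' lemma**. -/
theorem exists_nonneg_vecMul_eq [Fintype m] (A : Matrix m n ℝ) (c : n → ℝ)
    (h : ∀ z, 0 ≤ A *ᵥ z → 0 ≤ c ⬝ᵥ z) : ∃ y, 0 ≤ y ∧ y ᵥ* A = c := by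
  by_contra hc
  have hmem : c ∉ conicHull (fun i => A i) Finset.univ := by
    rintro ⟨y, hy, hyc⟩
    exact hc ⟨y, fun i => hy i (Finset.mem_univ i), by rw [vecMul_eq_sum]; exact hyc⟩
  obtain ⟨f, hf, hfc⟩ :=
    ProperCone.hyperplane_separation_point ⟨conicHull _ Finset.univ, isClosed_conicHull⟩ hmem
  obtain ⟨z, hfz⟩ := exists_dotProduct_eq_of_strongDual f
  have hAz : 0 ≤ A *ᵥ z := fun i => by
    simpa [hfz, mulVec] using hf (A i) (apply_mem_conicHull (Finset.mem_univ i))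
  linarith [h z hAz, hfz c]

section AffineFarkas

variable {M : Matrix m n ℝ} {b : m → ℝ} {c : n → ℝ} {t : ℝ} {x₀ : n → ℝ}

theorem dotProduct_nonpos_of_mulVec_nonpos (hx₀ : M *ᵥ x₀ ≤ b)
    (h : ∀ x, M *ᵥ x ≤ b → c ⬝ᵥ x ≤ t) {z : n → ℝ} (hz : M *ᵥ z ≤ 0) : c ⬝ᵥ z ≤ 0 := by
  by_contra! hcz
  set r := (t + 1 - c ⬝ᵥ x₀) / (c ⬝ᵥ z)
  have hr : 0 ≤ r := div_nonneg (by linarith [h x₀ hx₀]) hcz.le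
  have hfeas : M *ᵥ (x₀ + r • z) ≤ b := by
    rw [mulVec_add, mulVec_smul]
    simpa using add_le_add hx₀ (smul_nonpos_of_nonneg_of_nonpos hr hz)
  have hval : c ⬝ᵥ (x₀ + r • z) = t + 1 := by
    rw [dotProduct_add, dotProduct_smul, smul_eq_mul, div_mul_cancel₀ _ hcz.ne']
    ring
  linarith [h _ hfeas]

theorem dotProduct_le_mul_of_mulVec_le_smul (hx₀ : M *ᵥ x₀ ≤ b)
    (h : ∀ x, M *ᵥ x ≤ b → c ⬝ᵥ x ≤ t) {s : ℝ} (hs : 0 ≤ s) {z : n → ℝ}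
    (hz : M *ᵥ z ≤ s • b) : c ⬝ᵥ z ≤ s * t := by
  rcases hs.eq_or_lt with rfl | hs
  · simpa using dotProduct_nonpos_of_mulVec_nonpos hx₀ h (by simpa using hz)
  · have hfeas : M *ᵥ (s⁻¹ • z) ≤ b := by
      rw [mulVec_smul]
      calc s⁻¹ • M *ᵥ z ≤ s⁻¹ • s • b := smul_le_smul_of_nonneg_left hz (inv_nonneg.2 hs.le)
        _ = b := inv_smul_smul₀ hs.ne' b
    have := h _ hfeas
    rw [dotProduct_smul, smul_eq_mul] at this
    calc c ⬝ᵥ z = s * (s⁻¹ * c ⬝ᵥ z) := by field_simp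
      _ ≤ s * t := mul_le_mul_of_nonneg_left this hs.le

theorem exists_nonneg_vecMul_eq_and_dotProduct_le [Fintype m] (M : Matrix m n ℝ) (b : m → ℝ)
    (c : n → ℝ) (t : ℝ) (hfeas : ∃ x, M *ᵥ x ≤ b) (h : ∀ x, M *ᵥ x ≤ b → c ⬝ᵥ x ≤ t) :
    ∃ y, 0 ≤ y ∧ y ᵥ* M = c ∧ y ⬝ᵥ b ≤ t := by
  obtain ⟨x₀, hx₀⟩ := hfeas
  -- the rows `(1, 0)` and `(b i, -M i)` tested against `(t, -c)`
  have hhom : ∀ z, 0 ≤ fromBlocks (1 : Matrix Unit Unit ℝ) 0 (replicateCol Unit b) (-M) *ᵥ z →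
      0 ≤ Sum.elim (fun _ => t) (-c) ⬝ᵥ z := by
    intro z hz
    have hs : 0 ≤ z (.inl ()) := by
      simpa [mulVec, dotProduct, Fintype.sum_sum_type] using hz (.inl ())
    have hMz : M *ᵥ (z ∘ .inr) ≤ z (.inl ()) • b := fun i => by
      simpa [mulVec, dotProduct, Fintype.sum_sum_type, mul_comm] using hz (.inr i)
    simpa [dotProduct, Fintype.sum_sum_type, mul_comm] using
      dotProduct_le_mul_of_mulVec_le_smul hx₀ h hs hMz
  obtain ⟨y, hy, hyA⟩ := exists_nonneg_vecMul_eq _ _ hhom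
  rw [vecMul_fromBlocks] at hyA
  have ht : y (.inl ()) + (y ∘ .inr) ⬝ᵥ b = t := by
    simpa [vecMul, dotProduct] using congrFun hyA (.inl ())
  have hc : (y ∘ .inr) ᵥ* M = c := funext fun j => by
    simpa [vecMul, dotProduct] using congrFun hyA (.inr j)
  have hslack : 0 ≤ y (.inl ()) := hy _
  exact ⟨y ∘ .inr, fun i => hy _, hc, by linarith⟩

theorem forall_mulVec_le_imp_mulVec_le_iff {k : Type*} [Fintype m] (M : Matrix m n ℝ)
    (b : m → ℝ) (C : Matrix k n ℝ) (e : k → ℝ) (hfeas : ∃ x, M *ᵥ x ≤ b) :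
    (∀ x, M *ᵥ x ≤ b → C *ᵥ x ≤ e) ↔
      ∃ Λ : Matrix k m ℝ, (∀ i j, 0 ≤ Λ i j) ∧ Λ * M = C ∧ Λ *ᵥ b ≤ e := by
  constructor
  · intro h
    choose Λ hΛ0 hΛM hΛb using fun i => exists_nonneg_vecMul_eq_and_dotProduct_le M b (C i) (e i)
      hfeas fun x hx => h x hx i
    refine ⟨Matrix.of Λ, fun i j => hΛ0 i j, funext fun i => ?_, hΛb⟩
    exact (mul_apply_eq_vecMul _ _ i).trans (hΛM i)
  · rintro ⟨Λ, hΛ0, rfl, hΛb⟩ x hx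
    rw [← mulVec_mulVec]
    exact le_trans (fun i => dotProduct_le_dotProduct_of_nonneg_left hx (hΛ0 i)) hΛb

end AffineFarkas

end Matrix

theorem stmt0_general {nA nB mA mB : ℕ}
    (HA : Matrix (Fin mA) (Fin nA) ℝ) (hA : Fin mA → ℝ)
    (HB : Matrix (Fin mB) (Fin nB) ℝ) (hB : Fin mB → ℝ)
    (T : Matrix (Fin nA) (Fin nB) ℝ) (d : Fin nA → ℝ)
    (Bset : Set (Fin nB → ℝ)) (hBset : Bset = {x | HB.mulVec x ≤ hB})
    (hne : Bset.Nonempty) :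
    ((fun x => T.mulVec x + d) '' Bset ⊆ {x | HA.mulVec x ≤ hA}) ↔
      ∃ Λ : Matrix (Fin mA) (Fin mB) ℝ,
        (∀ i j, 0 ≤ Λ i j) ∧ Λ * HB = HA * T ∧ Λ.mulVec hB ≤ hA - HA.mulVec d := by
  subst hBset
  have hcontain : ((fun x => T *ᵥ x + d) '' {x | HB *ᵥ x ≤ hB} ⊆ {x | HA *ᵥ x ≤ hA}) ↔
      ∀ x, HB *ᵥ x ≤ hB → (HA * T) *ᵥ x ≤ hA - HA *ᵥ d := by
    simp only [Set.subset_def, Set.forall_mem_image, Set.mem_ofPred_eq, mulVec_add,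
      mulVec_mulVec, le_sub_iff_add_le]
  rw [hcontain]
  exact forall_mulVec_le_imp_mulVec_le_iff HB hB (HA * T) _ hne

/-- Polytope containment extension of Farkas' lemma (Lemma 2 of the paper):
for a nonempty bounded polytope `B = {x | H_B x ≤ h_B}` and polyhedron
`A = {x | H_A x ≤ h_A}`, we have `T B + d ⊆ A` iff there is an entrywise
nonnegative matrix `Λ` with `Λ H_B = H_A T` and `Λ h_B ≤ h_A - H_A d`. -/
theorem stmt0 {nA nB mA mB : ℕ}
    (HA : Matrix (Fin mA) (Fin nA) ℝ) (hA : Fin mA → ℝ)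
    (HB : Matrix (Fin mB) (Fin nB) ℝ) (hB : Fin mB → ℝ)
    (T : Matrix (Fin nA) (Fin nB) ℝ) (d : Fin nA → ℝ)
    (Bset : Set (Fin nB → ℝ)) (hBset : Bset = {x | HB.mulVec x ≤ hB})
    (hne : Bset.Nonempty) (hbdd : Bornology.IsBounded Bset) :
    ((fun x => T.mulVec x + d) '' Bset ⊆ {x | HA.mulVec x ≤ hA}) ↔
      ∃ Λ : Matrix (Fin mA) (Fin mB) ℝ,
        (∀ i j, 0 ≤ Λ i j) ∧ Λ * HB = HA * T ∧ Λ.mulVec hB ≤ hA - HA.mulVec d :=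
  stmt0_general HA hA HB hB T d Bset hBset hne
end

section
/- Consider a rooted tree with node set $\mathcal{V}$, root $v_0$, parent map $\mathrm{child} : \mathcal{V}\setminus\{v_0\} \to \mathcal{V}$, a nonnegative cost $\mathcal{C} : \mathcal{V} \to \mathbb{R}_{\ge 0}$, and value function defined recursively by $V(v_0) = 0$ and $V(v) = \mathcal{C}(v) + V(\mathrm{child}(v))$. Suppose for each node $v$ there is a polytope $\mathbb{X}_v \subseteq \mathbb{R}^n$ and a control law $\mu_v : \mathbb{X}_v \to \mathbb{U}$ such that for all $x \in \mathbb{X}_v$ ($v \neq v_0$): $F(x, \mu_v(x)) \in \mathbb{X}_{\mathrm{child}(v)}$ and the stage cost satisfies $\gamma(x, \mu_v(x)) \le \mathcal{C}(v)$. Then for any $x_0 \in \mathbb{X}_{v}$ with $v$ at depth $d$ from the root, the closed-loop trajectory $x_{t+1} = F(x_t, \mu_{v_t}(x_t))$ (where $v_t$ is the node at depth $d-t$ along the path from $v$ to $v_0$) satisfies $x_d \in \mathbb{X}_{v_0}$ and $\sum_{t=0}^{d-1} \gamma(x_t, \mu_{v_t}(x_t)) \le V(v)$. -/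
/-!
Along the path `v, child v, …, child^[dep] v = v0` each node differs from the root, so the
recursion for `Val` telescopes to `Val v = ∑_{t < dep} C (child^[t] v)`. The invariant
`x t ∈ Xv (child^[t] v)` propagates by the step hypothesis, and in each step it bounds the
stage cost by `C (child^[t] v)`; summing gives the cost bound, and `t = dep` gives the goal set.
-/

open Finset

section TreePolicy

variable {V α : Type*} {v0 : V} {child : V → V}

theorem val_eq_sum_add_val_iterate {C Val : V → ℝ}
    (hVal : ∀ v, v ≠ v0 → Val v = C v + Val (child v))
    {v : V} {dep : ℕ} (hpath : ∀ t, t < dep → child^[t] v ≠ v0) :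
    Val v = ∑ t ∈ range dep, C (child^[t] v) + Val (child^[dep] v) := by
  induction dep with
  | zero => simp
  | succ d ih =>
    rw [ih fun t ht => hpath t (by omega), sum_range_succ,
      hVal _ (hpath d d.lt_succ_self), Function.iterate_succ_apply']
    ring

theorem iterate_mem_of_step {X : V → Set α} {f : V → α → α}
    (hstep : ∀ v, v ≠ v0 → ∀ x ∈ X v, f v x ∈ X (child v))
    {v : V} {dep : ℕ} (hpath : ∀ t, t < dep → child^[t] v ≠ v0)
    {x : ℕ → α} (hx0 : x 0 ∈ X v) (hxstep : ∀ t, t < dep → x (t + 1) = f (child^[t] v) (x t)) :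
    ∀ t ≤ dep, x t ∈ X (child^[t] v) := by
  intro t ht
  induction t with
  | zero => exact hx0
  | succ t ih =>
    rw [hxstep t ht, Function.iterate_succ_apply']
    exact hstep _ (hpath t ht) _ (ih (by omega))

end TreePolicy

theorem stmt13_general {n : ℕ} {U : Type*} (Vn : Type*) (v0 : Vn) (child : Vn → Vn)
    (C : Vn → ℝ)
    (Val : Vn → ℝ) (hVal0 : Val v0 = 0)
    (hVal : ∀ v, v ≠ v0 → Val v = C v + Val (child v))
    (Xv : Vn → Set (Fin n → ℝ)) (μ : Vn → (Fin n → ℝ) → U)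
    (F : (Fin n → ℝ) → U → (Fin n → ℝ)) (γ : (Fin n → ℝ) → U → ℝ)
    (hstep : ∀ v, v ≠ v0 → ∀ x ∈ Xv v,
      F x (μ v x) ∈ Xv (child v) ∧ γ x (μ v x) ≤ C v)
    (v : Vn) (dep : ℕ) (hdepth : child^[dep] v = v0)
    (hpath : ∀ t, t < dep → child^[t] v ≠ v0)
    (x : ℕ → Fin n → ℝ) (hx0 : x 0 ∈ Xv v)
    (hxstep : ∀ t, t < dep → x (t + 1) = F (x t) (μ (child^[t] v) (x t))) :
    x dep ∈ Xv v0 ∧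
      ∑ t ∈ Finset.range dep, γ (x t) (μ (child^[t] v) (x t)) ≤ Val v := by
  have hmem : ∀ t ≤ dep, x t ∈ Xv (child^[t] v) :=
    iterate_mem_of_step (f := fun w y => F y (μ w y)) (fun w hw y hy => (hstep w hw y hy).1)
      hpath hx0 hxstep
  refine ⟨hdepth ▸ hmem dep le_rfl, ?_⟩
  calc ∑ t ∈ range dep, γ (x t) (μ (child^[t] v) (x t))
      ≤ ∑ t ∈ range dep, C (child^[t] v) := by
        refine sum_le_sum fun t ht => ?_
        have ht : t < dep := mem_range.mp ht
        exact (hstep _ (hpath t ht) _ (hmem t ht.le)).2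
    _ = Val v := by rw [val_eq_sum_add_val_iterate hVal hpath, hdepth, hVal0, add_zero]

/-- Theorem 2 of the paper: along the tree, starting from any `x₀` in the
polytope of a node `v` at depth `dep` from the root, the closed-loop trajectory
generated by the node controllers reaches the root (goal) polytope in `dep`
steps, with accumulated stage cost bounded by the cost-to-go `V v`. -/
theorem stmt13 {n : ℕ} {U : Type*} (Vn : Type*) (v0 : Vn) (child : Vn → Vn)
    (C : Vn → ℝ) (hC : ∀ v, 0 ≤ C v)
    (Val : Vn → ℝ) (hVal0 : Val v0 = 0)
    (hVal : ∀ v, v ≠ v0 → Val v = C v + Val (child v))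
    (Xv : Vn → Set (Fin n → ℝ)) (μ : Vn → (Fin n → ℝ) → U)
    (F : (Fin n → ℝ) → U → (Fin n → ℝ)) (γ : (Fin n → ℝ) → U → ℝ)
    (hγ : ∀ x u, 0 ≤ γ x u)
    (hstep : ∀ v, v ≠ v0 → ∀ x ∈ Xv v,
      F x (μ v x) ∈ Xv (child v) ∧ γ x (μ v x) ≤ C v)
    (v : Vn) (dep : ℕ) (hdepth : child^[dep] v = v0)
    (hpath : ∀ t, t < dep → child^[t] v ≠ v0)
    (x : ℕ → Fin n → ℝ) (hx0 : x 0 ∈ Xv v)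
    (hxstep : ∀ t, t < dep → x (t + 1) = F (x t) (μ (child^[t] v) (x t))) :
    x dep ∈ Xv v0 ∧
      ∑ t ∈ Finset.range dep, γ (x t) (μ (child^[t] v) (x t)) ≤ Val v :=
  stmt13_general Vn v0 child C Val hVal0 hVal Xv μ F γ hstep v dep hdepth hpath x hx0 hxstep
end
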